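/- arXiv:1404.4699 — 3 statements merged into one kernel-verified Lean document; each statement's English description precedes it below -/
import Mathlib

section
/- For the double integrator switched system ẋ_1 = x_2, ẋ_2 = ±1 with x(0) = (1,1), x(T) = (0,0) and state constraint x_2(t) ≥ −1, the relaxed minimum time is 7/2, achieved by the relaxed control u_2 − u_1 = −1 on [0,2], 0 on [2,5/2], +1 on [5/2,7/2], with corresponding trajectory x_2(t) = 1 − t on [0,2], x_2 ≡ −1 on [2,5/2], x_2(t) = t − 7/2 on [5/2,7/2]. -/
/-!
Since `|v| ≤ 1`, the velocity `x₂` is `1`-Lipschitz, so on `[0, T]` it lies above `1 - t`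
(as `x₂ 0 = 1`), above `t - T` (as `x₂ T = 0`) and above `-1` (the state constraint), while
`x₁ T = 0` forces `∫₀ᵀ x₂ = -1`. Splitting `[0, T]` at `2` and `T - 1` and integrating these
bounds gives `∫₀ᵀ x₂ ≥ 5/2 - T` when `T ≥ 3`, hence `T ≥ 7/2`; when `T < 3`, the bounds `1 - t`
and `t - T` alone, split at `(T + 1) / 2`, already give `∫₀ᵀ x₂ > -1`. For `T = 7/2` the optimal
velocity is exactly the envelope of the three bounds.
-/

open MeasureTheory Set
open scoped NNReal

namespace DoubleIntegrator

lemma integral_affine (p q a b : ℝ) :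
    ∫ t in a..b, (p + q * t) = p * (b - a) + q * (b ^ 2 - a ^ 2) / 2 := by
  rw [intervalIntegral.integral_add intervalIntegrable_const
      (intervalIntegral.intervalIntegrable_id.const_mul q),
    intervalIntegral.integral_const_mul, integral_id, intervalIntegral.integral_const, smul_eq_mul]
  ring

lemma integral_eq_of_eqOn_affine {f : ℝ → ℝ} {a b p q : ℝ} (hab : a ≤ b)
    (hf : ∀ t ∈ Ioc a b, f t = p + q * t) :
    ∫ t in a..b, f t = p * (b - a) + q * (b ^ 2 - a ^ 2) / 2 := by
  rw [← integral_affine]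
  refine intervalIntegral.integral_congr_ae (Filter.Eventually.of_forall fun t ht => ?_)
  exact hf t (uIoc_of_le hab ▸ ht)

lemma le_integral_of_affine_le {f : ℝ → ℝ} {a b p q : ℝ} (hab : a ≤ b)
    (hf : IntervalIntegrable f volume a b) (h : ∀ t ∈ Icc a b, p + q * t ≤ f t) :
    p * (b - a) + q * (b ^ 2 - a ^ 2) / 2 ≤ ∫ t in a..b, f t := by
  rw [← integral_affine]
  exact intervalIntegral.integral_mono_on hab
    ((continuous_const.add (continuous_const.mul continuous_id)).intervalIntegrable a b) hf h

lemma intervalIntegrable_of_norm_le {v : ℝ → ℝ} {C : ℝ} (hv : Measurable v)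
    (hC : ∀ t, ‖v t‖ ≤ C) (a b : ℝ) : IntervalIntegrable v volume a b :=
  (intervalIntegrable_const (c := C)).mono_fun hv.aestronglyMeasurable
    (Filter.Eventually.of_forall fun t => (hC t).trans (le_abs_self C))

lemma lipschitzOnWith_of_eq_primitive {v x : ℝ → ℝ} {c T : ℝ} {C : ℝ≥0}
    (hv : ∀ a b, IntervalIntegrable v volume a b) (hC : ∀ t, ‖v t‖ ≤ C)
    (hx : ∀ t ∈ Icc 0 T, x t = c + ∫ s in 0..t, v s) :
    LipschitzOnWith C x (Icc 0 T) := by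
  refine LipschitzOnWith.of_dist_le_mul fun t ht s hs => ?_
  have hts : x t - x s = ∫ r in s..t, v r := by
    rw [hx t ht, hx s hs, add_sub_add_left_eq_sub,
      intervalIntegral.integral_interval_sub_left (hv 0 t) (hv 0 s)]
  rw [Real.dist_eq, Real.dist_eq, hts, ← Real.norm_eq_abs]
  exact intervalIntegral.norm_integral_le_of_norm_le_const fun r _ => hC r

lemma envelope_le_integral {x : ℝ → ℝ} {T a b : ℝ} (ha : 0 ≤ a) (hab : a ≤ b) (hb : b ≤ T)
    (hx : ContinuousOn x (Icc 0 T)) (h₁ : ∀ t ∈ Icc 0 T, 1 - t ≤ x t)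
    (h₂ : ∀ t ∈ Icc 0 T, -1 ≤ x t) (h₃ : ∀ t ∈ Icc 0 T, t - T ≤ x t) :
    a - a ^ 2 / 2 - (b - a) - (T - b) ^ 2 / 2 ≤ ∫ t in 0..T, x t := by
  have hint : ∀ {c d}, 0 ≤ c → c ≤ d → d ≤ T → IntervalIntegrable x volume c d :=
    fun hc hcd hd => (hx.mono (uIcc_of_le hcd ▸ Icc_subset_Icc hc hd)).intervalIntegrable
  have e₁ := le_integral_of_affine_le (p := 1) (q := -1) ha (hint le_rfl ha (hab.trans hb))
    fun t ht => by linarith [h₁ t (Icc_subset_Icc le_rfl (hab.trans hb) ht)]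
  have e₂ := le_integral_of_affine_le (p := -1) (q := 0) hab (hint ha hab hb)
    fun t ht => by linarith [h₂ t (Icc_subset_Icc ha hb ht)]
  have e₃ := le_integral_of_affine_le (p := -T) (q := 1) hb (hint (ha.trans hab) hb le_rfl)
    fun t ht => by linarith [h₃ t (Icc_subset_Icc (ha.trans hab) le_rfl ht)]
  rw [← intervalIntegral.integral_add_adjacent_intervals (hint le_rfl ha (hab.trans hb))
      (hint ha (hab.trans hb) le_rfl),
    ← intervalIntegral.integral_add_adjacent_intervals (hint ha hab hb)
      (hint (ha.trans hab) hb le_rfl)]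
  linarith

lemma seven_halves_le {x : ℝ → ℝ} {T : ℝ} (hT : 1 ≤ T) (hx : ContinuousOn x (Icc 0 T))
    (h₁ : ∀ t ∈ Icc 0 T, 1 - t ≤ x t) (h₂ : ∀ t ∈ Icc 0 T, -1 ≤ x t)
    (h₃ : ∀ t ∈ Icc 0 T, t - T ≤ x t) (hint : ∫ t in 0..T, x t = -1) :
    7 / 2 ≤ T := by
  rcases le_or_gt 3 T with h3 | h3
  · have := envelope_le_integral (a := 2) (b := T - 1) (by norm_num) (by linarith) (by linarith)
      hx h₁ h₂ h₃
    linarith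
  · have := envelope_le_integral (a := (T + 1) / 2) (b := (T + 1) / 2) (by linarith) le_rfl
      (by linarith) hx h₁ h₂ h₃
    nlinarith

lemma seven_halves_le_of_admissible {T : ℝ} {x₁ x₂ v : ℝ → ℝ} (hT : 0 ≤ T) (hv : Measurable v)
    (hv₁ : ∀ t, v t ∈ Icc (-1 : ℝ) 1) (hx₁T : x₁ T = 0) (hx₂T : x₂ T = 0)
    (hx₂ : ∀ t ∈ Icc 0 T, -1 ≤ x₂ t)
    (hx₁_eq : ∀ t ∈ Icc 0 T, x₁ t = 1 + ∫ s in Ioc (0 : ℝ) t, x₂ s)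
    (hx₂_eq : ∀ t ∈ Icc 0 T, x₂ t = 1 + ∫ s in Ioc (0 : ℝ) t, v s) :
    7 / 2 ≤ T := by
  have hvC : ∀ t, ‖v t‖ ≤ (1 : ℝ≥0) := fun t => abs_le.2 (hv₁ t)
  have hlip : LipschitzOnWith 1 x₂ (Icc 0 T) :=
    lipschitzOnWith_of_eq_primitive (intervalIntegrable_of_norm_le hv hvC) hvC fun t ht => by
      rw [hx₂_eq t ht, intervalIntegral.integral_of_le ht.1]
  have hT0 : T ∈ Icc 0 T := ⟨hT, le_rfl⟩
  have hx₂0 : x₂ 0 = 1 := by simpa using hx₂_eq 0 ⟨le_rfl, hT⟩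
  have h₁ : ∀ t ∈ Icc 0 T, 1 - t ≤ x₂ t := fun t ht => by
    have := hlip.dist_le_mul t ht 0 ⟨le_rfl, hT⟩
    rw [Real.dist_eq, Real.dist_eq, hx₂0, NNReal.coe_one, one_mul, sub_zero] at this
    linarith [abs_le.1 this, abs_of_nonneg ht.1]
  have h₃ : ∀ t ∈ Icc 0 T, t - T ≤ x₂ t := fun t ht => by
    have := hlip.dist_le_mul t ht T hT0
    rw [Real.dist_eq, Real.dist_eq, hx₂T, NNReal.coe_one, one_mul, sub_zero] at this
    linarith [abs_le.1 this, abs_of_nonpos (sub_nonpos.2 ht.2)]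
  refine seven_halves_le (by linarith [h₁ T hT0]) hlip.continuousOn h₁ hx₂ h₃ ?_
  rw [intervalIntegral.integral_of_le hT]
  linarith [hx₁_eq T hT0]

noncomputable def optimalControl (t : ℝ) : ℝ :=
  if t ≤ 2 then -1 else if t ≤ 5 / 2 then 0 else 1

noncomputable def optimalVelocity (t : ℝ) : ℝ :=
  if t ≤ 2 then 1 - t else if t ≤ 5 / 2 then -1 else t - 7 / 2

lemma measurable_optimalControl : Measurable optimalControl :=
  Measurable.ite measurableSet_Iic measurable_const
    (Measurable.ite measurableSet_Iic measurable_const measurable_const)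

lemma optimalControl_mem_Icc (t : ℝ) : optimalControl t ∈ Icc (-1 : ℝ) 1 := by
  unfold optimalControl; split_ifs <;> norm_num

lemma continuous_optimalVelocity : Continuous optimalVelocity :=
  Continuous.if_le (by fun_prop)
    (Continuous.if_le (by fun_prop) (by fun_prop) (by fun_prop) (by fun_prop)
      fun t ht => by rw [ht]; norm_num)
    (by fun_prop) (by fun_prop) fun t ht => by rw [ht]; norm_num

lemma neg_one_le_optimalVelocity (t : ℝ) : -1 ≤ optimalVelocity t := by
  unfold optimalVelocity; split_ifs <;> linarith

lemma optimalVelocity_eq_primitive {t : ℝ} (ht : 0 ≤ t) :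
    optimalVelocity t = 1 + ∫ s in 0..t, optimalControl s := by
  have hi := intervalIntegrable_of_norm_le measurable_optimalControl
    fun s => abs_le.2 (optimalControl_mem_Icc s)
  have hconst : ∀ {a b c : ℝ}, a ≤ b → (∀ s ∈ Ioc a b, optimalControl s = c) →
      ∫ s in a..b, optimalControl s = c * (b - a) := fun hab h => by
    rw [integral_eq_of_eqOn_affine (q := 0) hab fun s hs => by rw [h s hs, zero_mul, add_zero]]
    ring
  rcases le_or_gt t 2 with h₂ | h₂
  · rw [hconst ht fun s hs => if_pos (hs.2.trans h₂), optimalVelocity, if_pos h₂]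
    ring
  rw [← intervalIntegral.integral_add_adjacent_intervals (hi 0 2) (hi 2 t),
    hconst (by norm_num) fun s hs => if_pos hs.2]
  rcases le_or_gt t (5 / 2) with h₅ | h₅
  · rw [hconst h₂.le fun s hs => by
        rw [optimalControl, if_neg (not_le.2 hs.1), if_pos (hs.2.trans h₅)],
      optimalVelocity, if_neg (not_le.2 h₂), if_pos h₅]
    ring
  rw [← intervalIntegral.integral_add_adjacent_intervals (hi 2 (5 / 2)) (hi (5 / 2) t),
    hconst (by norm_num) fun s hs => by rw [optimalControl, if_neg (not_le.2 hs.1), if_pos hs.2],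
    hconst h₅.le fun s hs => by
      rw [optimalControl, if_neg (by linarith [hs.1]), if_neg (not_le.2 hs.1)],
    optimalVelocity, if_neg (not_le.2 h₂), if_neg (not_le.2 h₅)]
  ring

lemma integral_optimalVelocity : ∫ s in Ioc (0 : ℝ) (7 / 2), optimalVelocity s = -1 := by
  have hi := continuous_optimalVelocity.intervalIntegrable (μ := volume)
  rw [← intervalIntegral.integral_of_le (by norm_num),
    ← intervalIntegral.integral_add_adjacent_intervals (hi 0 2) (hi 2 (7 / 2)),
    ← intervalIntegral.integral_add_adjacent_intervals (hi 2 (5 / 2)) (hi (5 / 2) (7 / 2)),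
    integral_eq_of_eqOn_affine (p := 1) (q := -1) (by norm_num) fun s hs => by
      rw [optimalVelocity, if_pos hs.2]; ring,
    integral_eq_of_eqOn_affine (p := -1) (q := 0) (by norm_num) fun s hs => by
      rw [optimalVelocity, if_neg (not_le.2 hs.1), if_pos hs.2]; ring,
    integral_eq_of_eqOn_affine (p := -(7 / 2)) (q := 1) (by norm_num) fun s hs => by
      rw [optimalVelocity, if_neg (by linarith [hs.1]), if_neg (not_le.2 hs.1)]; ring]
  norm_num

end DoubleIntegrator

open DoubleIntegrator

/-- For the double integrator `ẋ₁ = x₂`, `ẋ₂ = v ∈ [-1,1]` with `x(0) = (1,1)`,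
`x(T) = (0,0)` and state constraint `x₂ ≥ -1`, the relaxed minimum time is `7/2`,
achieved by `v = -1` on `[0,2]`, `v = 0` on `[2,5/2]`, `v = 1` on `[5/2,7/2]`,
with `x₂(t) = 1 - t`, then `-1`, then `t - 7/2`. -/
theorem stmt_9
    (Adm : ℝ → (ℝ → ℝ) → (ℝ → ℝ) → (ℝ → ℝ) → Prop)
    (hAdm : ∀ T x1 x2 v, Adm T x1 x2 v ↔
      (0 ≤ T ∧ Measurable v ∧ (∀ t, v t ∈ Set.Icc (-1:ℝ) 1) ∧
       x1 0 = 1 ∧ x2 0 = 1 ∧ x1 T = 0 ∧ x2 T = 0 ∧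
       (∀ t ∈ Set.Icc 0 T, -1 ≤ x2 t) ∧
       (∀ t ∈ Set.Icc 0 T, x1 t = 1 + ∫ s in Set.Ioc (0:ℝ) t, x2 s) ∧
       (∀ t ∈ Set.Icc 0 T, x2 t = 1 + ∫ s in Set.Ioc (0:ℝ) t, v s)))
    (vs x2s x1s : ℝ → ℝ)
    (hvs : vs = fun t => if t ≤ 2 then -1 else if t ≤ 5/2 then 0 else 1)
    (hx2s : x2s = fun t => if t ≤ 2 then 1 - t else if t ≤ 5/2 then -1 else t - 7/2)
    (hx1s : x1s = fun t => 1 + ∫ s in Set.Ioc (0:ℝ) t, x2s s) :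
    IsLeast {T : ℝ | ∃ x1 x2 v, Adm T x1 x2 v} (7/2) ∧
    Adm (7/2) x1s x2s vs := by
  have hfeas : Adm (7 / 2) x1s x2s vs := by
    subst hvs hx2s hx1s
    rw [hAdm]
    refine ⟨by norm_num, measurable_optimalControl, optimalControl_mem_Icc, by simp,
      by norm_num, ?_, by norm_num, fun t _ => neg_one_le_optimalVelocity t, fun t _ => rfl,
      fun t ht => ?_⟩
    · show 1 + ∫ s in Set.Ioc (0 : ℝ) (7 / 2), optimalVelocity s = 0
      rw [integral_optimalVelocity]; norm_num
    · rw [← intervalIntegral.integral_of_le ht.1]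
      exact optimalVelocity_eq_primitive ht.1
  refine ⟨⟨⟨x1s, x2s, vs, hfeas⟩, ?_⟩, hfeas⟩
  rintro T ⟨x1, x2, v, hA⟩
  obtain ⟨hT, hv, hv₁, -, -, hx₁T, hx₂T, hx₂, hx₁_eq, hx₂_eq⟩ := (hAdm T x1 x2 v).1 hA
  exact seven_halves_le_of_admissible hT hv hv₁ hx₁T hx₂T hx₂ hx₁_eq hx₂_eq
end

section
/- For the double integrator with state constraint x_2 ≥ −1, any trajectory with ẋ_1 = x_2, ẋ_2 = v(t) ∈ [−1,1], x(0) = (1,1), x(T) = (0,0) satisfies T ≥ 7/2. -/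
/-!
Since `|ẋ₂| ≤ 1`, the velocity `x₂` is `1`-Lipschitz, so `x₂ s ≥ 1 - s` (it starts at `1`) and
`x₂ s ≥ s - T` (it ends at `0`); together with `x₂ ≥ -1` this bounds `x₂` from below by a
piecewise linear profile. Its integral over `[0, T]` exceeds `-1 = x₁ T - x₁ 0` unless `T ≥ 7/2`.
-/

open MeasureTheory intervalIntegral Set
open scoped NNReal

theorem lipschitzOnWith_of_eq_add_integral {f v : ℝ → ℝ} {a b c : ℝ} {C : ℝ≥0}
    (hv : IntervalIntegrable v volume a b) (hvC : ∀ t, ‖v t‖ ≤ C)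
    (hf : ∀ t ∈ Icc a b, f t = c + ∫ s in Ioc a t, v s) :
    LipschitzOnWith C f (Icc a b) := by
  have hf' : ∀ t ∈ Icc a b, f t = c + ∫ s in a..t, v s := fun t ht => by
    rw [integral_of_le ht.1, hf t ht]
  have hint : ∀ t ∈ Icc a b, IntervalIntegrable v volume a t := fun t ht =>
    hv.mono_set (uIcc_subset_uIcc_left (mem_uIcc_of_le ht.1 ht.2))
  refine LipschitzOnWith.of_dist_le_mul fun t ht s hs => ?_
  rw [Real.dist_eq, Real.dist_eq, hf' t ht, hf' s hs, add_sub_add_left_eq_sub,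
    integral_interval_sub_left (hint t ht) (hint s hs)]
  simpa only [Real.norm_eq_abs] using norm_integral_le_of_norm_le_const fun u _ => hvC u

theorem integral_ge_of_three_lower_bounds {g : ℝ → ℝ} {T a b : ℝ}
    (ha : 0 ≤ a) (hab : a ≤ b) (hbT : b ≤ T) (hg : IntervalIntegrable g volume 0 T)
    (hstart : ∀ s ∈ Icc 0 T, 1 - s ≤ g s) (hmid : ∀ s ∈ Icc 0 T, -1 ≤ g s)
    (hend : ∀ s ∈ Icc 0 T, s - T ≤ g s) :
    a - a ^ 2 / 2 - (b - a) - (T - b) ^ 2 / 2 ≤ ∫ s in (0)..T, g s := by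
  have hb : 0 ≤ b := ha.trans hab
  have hsub : ∀ {u w}, 0 ≤ u → u ≤ w → w ≤ T → IntervalIntegrable g volume u w :=
    fun hu huw hw => hg.mono_set (uIcc_subset_uIcc (mem_uIcc_of_le hu (huw.trans hw))
      (mem_uIcc_of_le (hu.trans huw) hw))
  have hsplit : ∫ s in (0)..T, g s =
      (∫ s in (0)..a, g s) + (∫ s in a..b, g s) + ∫ s in b..T, g s := by
    rw [integral_add_adjacent_intervals (hsub le_rfl ha (hab.trans hbT)) (hsub ha hab hbT),
      integral_add_adjacent_intervals (hsub le_rfl hb hbT) (hsub hb hbT le_rfl)]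
  have h₁ : ∫ s in (0)..a, (1 - s) ≤ ∫ s in (0)..a, g s :=
    integral_mono_on ha ((continuous_const.sub continuous_id).intervalIntegrable _ _)
      (hsub le_rfl ha (hab.trans hbT)) fun s hs => hstart s ⟨hs.1, hs.2.trans (hab.trans hbT)⟩
  have h₂ : ∫ _ in a..b, (-1 : ℝ) ≤ ∫ s in a..b, g s :=
    integral_mono_on hab intervalIntegrable_const (hsub ha hab hbT)
      fun s hs => hmid s ⟨ha.trans hs.1, hs.2.trans hbT⟩
  have h₃ : ∫ s in b..T, (s - T) ≤ ∫ s in b..T, g s :=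
    integral_mono_on hbT ((continuous_id.sub continuous_const).intervalIntegrable _ _)
      (hsub hb hbT le_rfl) fun s hs => hend s ⟨hb.trans hs.1, hs.2⟩
  simp only [integral_sub intervalIntegrable_const intervalIntegrable_id,
    integral_sub intervalIntegrable_id intervalIntegrable_const, intervalIntegral.integral_const,
    integral_id, smul_eq_mul] at h₁ h₂ h₃
  nlinarith

theorem integral_ge_of_lipschitzOnWith_one {g : ℝ → ℝ} {T a b : ℝ}
    (ha : 0 ≤ a) (hab : a ≤ b) (hbT : b ≤ T) (hg : LipschitzOnWith 1 g (Icc 0 T))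
    (hg0 : g 0 = 1) (hgT : g T = 0) (hmid : ∀ s ∈ Icc 0 T, -1 ≤ g s) :
    a - a ^ 2 / 2 - (b - a) - (T - b) ^ 2 / 2 ≤ ∫ s in (0)..T, g s := by
  have hT : 0 ≤ T := (ha.trans hab).trans hbT
  refine integral_ge_of_three_lower_bounds ha hab hbT
    (hg.continuousOn.intervalIntegrable_of_Icc hT) (fun s hs => ?_) hmid fun s hs => ?_
  · have := hg.le_add_mul ⟨le_rfl, hT⟩ hs
    rw [hg0, Real.dist_eq, abs_sub_comm, abs_of_nonneg (sub_nonneg.2 hs.1),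
      NNReal.coe_one, one_mul] at this
    linarith
  · have := hg.le_add_mul ⟨hT, le_rfl⟩ hs
    rw [hgT, Real.dist_eq, abs_of_nonneg (sub_nonneg.2 hs.2), NNReal.coe_one, one_mul] at this
    linarith

theorem stmt_10_general (T : ℝ) (x1 x2 v : ℝ → ℝ)
    (hT : 0 ≤ T)
    (hv : Measurable v) (hv1 : ∀ t, v t ∈ Set.Icc (-1:ℝ) 1)
    (hinit2 : x2 0 = 1)
    (hfin1 : x1 T = 0) (hfin2 : x2 T = 0)
    (hcon : ∀ t ∈ Set.Icc 0 T, -1 ≤ x2 t)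
    (hx1 : ∀ t ∈ Set.Icc 0 T, x1 t = 1 + ∫ s in Set.Ioc (0:ℝ) t, x2 s)
    (hx2 : ∀ t ∈ Set.Icc 0 T, x2 t = 1 + ∫ s in Set.Ioc (0:ℝ) t, v s) :
    7/2 ≤ T := by
  have hvC : ∀ t, ‖v t‖ ≤ (1 : ℝ≥0) := fun t => abs_le.2 (hv1 t)
  have hvi : IntervalIntegrable v volume 0 T :=
    (intervalIntegrable_iff_integrableOn_Ioc_of_le hT).2 <|
      Measure.integrableOn_of_bounded (by simp) hv.aestronglyMeasurable (ae_of_all _ hvC)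
  have hlip : LipschitzOnWith 1 x2 (Icc 0 T) := lipschitzOnWith_of_eq_add_integral hvi hvC hx2
  have htotal : ∫ s in (0)..T, x2 s = -1 := by
    rw [integral_of_le hT]
    linarith [hx1 T ⟨hT, le_rfl⟩]
  have key := fun {a b : ℝ} ha hab hbT =>
    htotal ▸ integral_ge_of_lipschitzOnWith_one (a := a) (b := b) ha hab hbT hlip hinit2 hfin2 hcon
  by_contra! hlt
  -- `a` and `b` are the break points `2` and `T - 1` of the profile, truncated to `[0, T]`.
  rcases le_total T 2 with h2 | h2
  · nlinarith [key hT le_rfl le_rfl]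
  rcases lt_or_ge T 3 with h3 | h3
  · nlinarith [key zero_le_two h2 le_rfl]
  · nlinarith [key (b := T - 1) zero_le_two (by linarith) (by linarith)]

/-- Lower bound for the constrained double integrator: any trajectory with
`ẋ₁ = x₂`, `ẋ₂ = v(t) ∈ [-1,1]`, `x₂ ≥ -1`, steering `(1,1)` at time `0` to
`(0,0)` at time `T` satisfies `T ≥ 7/2`. -/
theorem stmt_10 (T : ℝ) (x1 x2 v : ℝ → ℝ)
    (hT : 0 ≤ T)
    (hv : Measurable v) (hv1 : ∀ t, v t ∈ Set.Icc (-1:ℝ) 1)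
    (hinit1 : x1 0 = 1) (hinit2 : x2 0 = 1)
    (hfin1 : x1 T = 0) (hfin2 : x2 T = 0)
    (hcon : ∀ t ∈ Set.Icc 0 T, -1 ≤ x2 t)
    (hx1 : ∀ t ∈ Set.Icc 0 T, x1 t = 1 + ∫ s in Set.Ioc (0:ℝ) t, x2 s)
    (hx2 : ∀ t ∈ Set.Icc 0 T, x2 t = 1 + ∫ s in Set.Ioc (0:ℝ) t, v s) :
    7/2 ≤ T :=
  stmt_10_general T x1 x2 v hT hv hv1 hinit2 hfin1 hfin2 hcon hx1 hx2
end

section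
/- Equivalence of unstructured and modal measure LPs: the optimal value of the LP over a single measure μ ∈ M^+(K × U) (U the standard simplex vertices set or simplex) with constraints ⟨∂v/∂t + ∇_x v · Σ_j f_j u_j, μ⟩ = v(T,x_T) − v(0,x_0) for all v ∈ C^1(K), cost ⟨Σ_j l_j u_j, μ⟩, equals the optimal value of the LP over m measures μ_j ∈ M^+(K) with constraints Σ_j ⟨∂v/∂t + ∇_x v · f_j, μ_j⟩ = v(T,x_T) − v(0,x_0) and cost Σ_j ⟨l_j, μ_j⟩. -/
/-!
Because `U = {e_1, …, e_m}` is finite, a measure `μ` on `K × U` is the sum of its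
restrictions to the slices `K × {e_j}`, and each restriction is `μ_j ⊗ δ_{e_j}` for the
modal measure `μ_j` (its push-forward to `K`); conversely any family `μ_j` arises this way
from `Σ_j μ_j ⊗ δ_{e_j}`.
The integrands are linear in `u`, so on the slice `u = e_j` they become `f_j` and `l_j`. Hence
the two LPs have the same sets of feasible costs, not only the same infimum.
-/

open MeasureTheory Set Function

namespace MeasureTheory.Measure

variable {α β ι : Type*} [MeasurableSpace α] [MeasurableSpace β]

noncomputable def modalMeasure (μ : Measure (α × β)) (b : β) : Measure α :=
  (μ.restrict (Prod.snd ⁻¹' {b})).map Prod.fst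

noncomputable def liftModal [Fintype ι] (e : ι → β) (ν : ι → Measure α) :
    Measure (α × β) :=
  ∑ j, (ν j).map (·, e j)

instance (μ : Measure (α × β)) [IsFiniteMeasure μ] (b : β) :
    IsFiniteMeasure (modalMeasure μ b) := by
  unfold modalMeasure; infer_instance

instance [Fintype ι] (e : ι → β) (ν : ι → Measure α) [∀ j, IsFiniteMeasure (ν j)] :
    IsFiniteMeasure (liftModal e ν) := by
  unfold liftModal; infer_instance

theorem modalMeasure_compl_eq_zero {μ : Measure (α × β)} {s : Set α} {t : Set β}
    (hs : MeasurableSet s) (hμ : μ (s ×ˢ t)ᶜ = 0) (b : β) : modalMeasure μ b sᶜ = 0 := by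
  rw [modalMeasure, map_apply measurable_fst hs.compl]
  have hsub : Prod.fst ⁻¹' sᶜ ⊆ (s ×ˢ t)ᶜ := fun q hq hst ↦ hq hst.1
  exact nonpos_iff_eq_zero.1 <| (restrict_apply_le _ _).trans_eq (measure_mono_null hsub hμ)

variable [MeasurableSingletonClass β]

theorem map_prodMk_modalMeasure (μ : Measure (α × β)) (b : β) :
    (modalMeasure μ b).map (·, b) = μ.restrict (Prod.snd ⁻¹' {b}) := by
  have hb : MeasurableSet (Prod.snd ⁻¹' {b} : Set (α × β)) :=
    measurable_snd (measurableSet_singleton b)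
  rw [modalMeasure, map_map measurable_prodMk_right measurable_fst]
  conv_rhs => rw [← map_id (μ := μ.restrict _)]
  refine map_congr ?_
  filter_upwards [ae_restrict_mem hb] with q hq
  exact Prod.ext rfl hq.symm

theorem liftModal_modalMeasure [Fintype ι] {e : ι → β} (he : Injective e)
    {μ : Measure (α × β)} (hμ : μ (univ ×ˢ range e)ᶜ = 0) :
    liftModal e (fun j ↦ modalMeasure μ (e j)) = μ := by
  have hdisj : Pairwise (Disjoint on fun j ↦ (Prod.snd ⁻¹' {e j} : Set (α × β))) :=
    fun j k hjk ↦ (disjoint_singleton.2 (he.ne hjk)).preimage _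
  have hcover : (⋃ j, Prod.snd ⁻¹' {e j} : Set (α × β)) = univ ×ˢ range e := by
    ext q; simp [eq_comm]
  simp only [liftModal, map_prodMk_modalMeasure, ← sum_fintype]
  rw [← restrict_iUnion hdisj fun j ↦ measurable_snd (measurableSet_singleton _), hcover]
  exact restrict_eq_self_of_ae_mem <|
    (measure_eq_zero_iff_ae_notMem.1 hμ).mono fun q hq ↦ not_not.1 hq

theorem liftModal_compl_eq_zero [Fintype ι] {e : ι → β} {ν : ι → Measure α} {s : Set α}
    (hν : ∀ j, ν j sᶜ = 0) : liftModal e ν (s ×ˢ range e)ᶜ = 0 := by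
  simp only [liftModal, finsetSum_apply, Finset.sum_eq_zero_iff]
  intro j _
  rw [(measurableEmbedding_prod_mk_right (e j)).map_apply]
  convert hν j using 2
  ext p; simp

theorem setIntegral_liftModal {E : Type*} [NormedAddCommGroup E] [NormedSpace ℝ E] [Fintype ι]
    {e : ι → β} {ν : ι → Measure α} {s : Set α} {g : α × β → E}
    (hg : ∀ j, IntegrableOn (fun p ↦ g (p, e j)) s (ν j)) :
    ∫ q in s ×ˢ range e, g q ∂liftModal e ν = ∑ j, ∫ p in s, g (p, e j) ∂ν j := by
  have hpre : ∀ j, (·, e j) ⁻¹' (s ×ˢ range e) = s := fun j ↦ by ext p; simp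
  have hrestrict : ∀ j, ((ν j).map (·, e j)).restrict (s ×ˢ range e)
      = ((ν j).restrict s).map (·, e j) := fun j ↦ by
    rw [(measurableEmbedding_prod_mk_right (e j)).restrict_map, hpre]
  rw [liftModal, ← sum_fintype, restrict_sum_of_countable, sum_fintype,
    Finset.sum_congr rfl fun j _ ↦ hrestrict j, integral_finsetSum_measure]
  · exact Finset.sum_congr rfl fun j _ ↦ (measurableEmbedding_prod_mk_right (e j)).integral_map _
  · exact fun j _ ↦ (measurableEmbedding_prod_mk_right (e j)).integrable_map_iff.2 (hg j)

end MeasureTheory.Measure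

open Measure

theorem stmt_17_general (n m : ℕ) (T : ℝ)
    (X : Set (Fin n → ℝ)) (hX : IsCompact X)
    (x0 xT : Fin n → ℝ)
    (l : Fin m → ℝ × (Fin n → ℝ) → ℝ)
    (f : Fin m → ℝ × (Fin n → ℝ) → (Fin n → ℝ))
    (hl : ∀ j, ContinuousOn (l j) (Set.Icc 0 T ×ˢ X))
    (hf : ∀ j, ContinuousOn (f j) (Set.Icc 0 T ×ˢ X))
    (U : Set (Fin m → ℝ))
    (hU : U = Set.range fun j : Fin m => (Pi.single j 1 : Fin m → ℝ))
    (S1 S2 : Set ℝ)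
    (hS1 : S1 = {c | ∃ μ : Measure ((ℝ × (Fin n → ℝ)) × (Fin m → ℝ)),
      IsFiniteMeasure μ ∧ μ ((Set.Icc 0 T ×ˢ X) ×ˢ U)ᶜ = 0 ∧
      (∀ v : ℝ × (Fin n → ℝ) → ℝ, ContDiff ℝ 1 v →
        (∫ q in (Set.Icc 0 T ×ˢ X) ×ˢ U,
            (fderiv ℝ v q.1) (1, ∑ j, q.2 j • f j q.1) ∂μ)
          = v (T, xT) - v (0, x0)) ∧
      (∫ q in (Set.Icc 0 T ×ˢ X) ×ˢ U, ∑ j, q.2 j * l j q.1 ∂μ) = c})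
    (hS2 : S2 = {c | ∃ μ : Fin m → Measure (ℝ × (Fin n → ℝ)),
      (∀ j, IsFiniteMeasure (μ j)) ∧ (∀ j, μ j (Set.Icc 0 T ×ˢ X)ᶜ = 0) ∧
      (∀ v : ℝ × (Fin n → ℝ) → ℝ, ContDiff ℝ 1 v →
        (∑ j, ∫ p in Set.Icc 0 T ×ˢ X, (fderiv ℝ v p) (1, f j p) ∂(μ j))
          = v (T, xT) - v (0, x0)) ∧
      (∑ j, ∫ p in Set.Icc 0 T ×ˢ X, l j p ∂(μ j)) = c}) :
    sInf S1 = sInf S2 := by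
  subst hU hS1 hS2
  set K := Set.Icc 0 T ×ˢ X
  set e : Fin m → Fin m → ℝ := fun j ↦ Pi.single j 1
  have hK : IsCompact K := isCompact_Icc.prod hX
  have hKm : MeasurableSet K := hK.isClosed.measurableSet
  have he : Injective e := fun j k h ↦ by
    simpa [e, Pi.single_apply, eq_comm] using congrFun h k
  have hdyn : ∀ (ν : Fin m → Measure (ℝ × (Fin n → ℝ))) [∀ j, IsFiniteMeasure (ν j)]
      (v : ℝ × (Fin n → ℝ) → ℝ), ContDiff ℝ 1 v →
      ∫ q in K ×ˢ range e, fderiv ℝ v q.1 (1, ∑ j, q.2 j • f j q.1) ∂liftModal e ν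
        = ∑ j, ∫ p in K, fderiv ℝ v p (1, f j p) ∂ν j := by
    intro ν _ v hv
    rw [setIntegral_liftModal fun j ↦ ?_] <;> simp only [e, Fintype.sum_single_smul, one_smul]
    exact ((hv.continuous_fderiv one_ne_zero).continuousOn.clm_apply
      (continuousOn_const.prodMk (hf j))).integrableOn_compact hK
  have hcost :
      ∀ (ν : Fin m → Measure (ℝ × (Fin n → ℝ))) [∀ j, IsFiniteMeasure (ν j)],
      ∫ q in K ×ˢ range e, ∑ j, q.2 j * l j q.1 ∂liftModal e ν
        = ∑ j, ∫ p in K, l j p ∂ν j := by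
    intro ν _
    rw [setIntegral_liftModal fun j ↦ ?_] <;>
      simp only [e, ← smul_eq_mul, Fintype.sum_single_smul, one_smul]
    exact (hl j).integrableOn_compact hK
  congr 1
  ext c
  constructor
  · rintro ⟨μ, _, hμK, hdynμ, hcostμ⟩
    have hμ : liftModal e (fun j ↦ modalMeasure μ (e j)) = μ :=
      liftModal_modalMeasure he (measure_mono_null (by gcongr; exact subset_univ K) hμK)
    refine ⟨fun j ↦ modalMeasure μ (e j), inferInstance,
      fun j ↦ modalMeasure_compl_eq_zero hKm hμK _, fun v hv ↦ ?_, ?_⟩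
    · rw [← hdyn _ v hv, hμ, hdynμ v hv]
    · rw [← hcost, hμ, hcostμ]
  · rintro ⟨ν, _, hνK, hdynν, hcostν⟩
    exact ⟨liftModal e ν, inferInstance, liftModal_compl_eq_zero hνK,
      fun v hv ↦ (hdyn ν v hv).trans (hdynν v hv), (hcost ν).trans hcostν⟩

/-- Equivalence of the unstructured and modal measure LPs for switched systems:
the optimal value of the LP over a single occupation measure on `K × U`
(`U` the set of standard unit vectors of `ℝ^m`) equals the optimal value of the LP
over `m` modal occupation measures on `K`. -/
theorem stmt_17 (n m : ℕ) (T : ℝ) (hT : 0 < T)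
    (X : Set (Fin n → ℝ)) (hX : IsCompact X)
    (x0 xT : Fin n → ℝ) (hx0 : x0 ∈ X) (hxT : xT ∈ X)
    (l : Fin m → ℝ × (Fin n → ℝ) → ℝ)
    (f : Fin m → ℝ × (Fin n → ℝ) → (Fin n → ℝ))
    (hl : ∀ j, ContinuousOn (l j) (Set.Icc 0 T ×ˢ X))
    (hf : ∀ j, ContinuousOn (f j) (Set.Icc 0 T ×ˢ X))
    (U : Set (Fin m → ℝ))
    (hU : U = Set.range fun j : Fin m => (Pi.single j 1 : Fin m → ℝ))
    (S1 S2 : Set ℝ)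
    (hS1 : S1 = {c | ∃ μ : Measure ((ℝ × (Fin n → ℝ)) × (Fin m → ℝ)),
      IsFiniteMeasure μ ∧ μ ((Set.Icc 0 T ×ˢ X) ×ˢ U)ᶜ = 0 ∧
      (∀ v : ℝ × (Fin n → ℝ) → ℝ, ContDiff ℝ 1 v →
        (∫ q in (Set.Icc 0 T ×ˢ X) ×ˢ U,
            (fderiv ℝ v q.1) (1, ∑ j, q.2 j • f j q.1) ∂μ)
          = v (T, xT) - v (0, x0)) ∧
      (∫ q in (Set.Icc 0 T ×ˢ X) ×ˢ U, ∑ j, q.2 j * l j q.1 ∂μ) = c})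
    (hS2 : S2 = {c | ∃ μ : Fin m → Measure (ℝ × (Fin n → ℝ)),
      (∀ j, IsFiniteMeasure (μ j)) ∧ (∀ j, μ j (Set.Icc 0 T ×ˢ X)ᶜ = 0) ∧
      (∀ v : ℝ × (Fin n → ℝ) → ℝ, ContDiff ℝ 1 v →
        (∑ j, ∫ p in Set.Icc 0 T ×ˢ X, (fderiv ℝ v p) (1, f j p) ∂(μ j))
          = v (T, xT) - v (0, x0)) ∧
      (∑ j, ∫ p in Set.Icc 0 T ×ˢ X, l j p ∂(μ j)) = c}) :
    sInf S1 = sInf S2 :=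
  stmt_17_general n m T X hX x0 xT l f hl hf U hU S1 S2 hS1 hS2
end
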